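/- arXiv:1805.01059 — 2 statements merged into one kernel-verified Lean document; each statement's English description precedes it below -/
import Mathlib

section
/- Let N ∈ {1,2,3}, 2 < p < (2N+8)/N with p ≠ 4, a, b > 0, and let Q be a positive constant (representing |Q_p|₂). Suppose c ↦ m_c is a family of positive reals indexed by c > 0 satisfying a + b·m_c² = (N(p-2)/4)·c^{(2N-p(N-2))/2}·m_c^{(N(p-2)-4)/2}/Q^{p-2} for all large c, and suppose m_c → +∞ as c → +∞. If 2 < p < 4, then m_c/c → 0 as c → +∞. -/
open Filter

/-!
Dropping `a ≥ 0` from the identity gives `b m_c² ≤ K c^α m_c^β` with `K = N(p-2)/(4 Q^(p-2))`,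
i.e. `m_c^δ ≤ (K / b) c^α` with `δ = 2 - β`. Here `2δ = 8 - 2N + N(4 - p) > 0` as `N ≤ 3` and
`p < 4`, and `α - δ = p - 4`, so `(m_c / c)^δ ≤ (K / b) c^(p-4) → 0`.
-/

namespace Real

theorem rpow_le_div_of_add_mul_sq_eq {a b x A β δ : ℝ} (ha : 0 ≤ a) (hb : 0 < b) (hx : 0 < x)
    (hβδ : β + δ = 2) (h : a + b * x ^ 2 = A * x ^ β) : x ^ δ ≤ A / b := by
  have hsq : x ^ 2 = x ^ δ * x ^ β := by
    rw [← rpow_add hx, add_comm, hβδ, rpow_two]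
  have hxβ : 0 < x ^ β := rpow_pos_of_pos hx β
  rw [le_div_iff₀ hb, ← mul_le_mul_iff_left₀ hxβ]
  nlinarith

theorem div_rpow_le_of_rpow_le {x c C α δ : ℝ} (hx : 0 ≤ x) (hc : 0 < c)
    (h : x ^ δ ≤ C * c ^ α) : (x / c) ^ δ ≤ C * c ^ (α - δ) := by
  rw [div_rpow hx hc.le, rpow_sub hc, ← mul_div_assoc]
  exact div_le_div_of_nonneg_right h (rpow_nonneg hc.le δ)

end Real

theorem tendsto_zero_of_rpow_le {α : Type*} {l : Filter α} {f g : α → ℝ} {δ : ℝ} (hδ : 0 < δ)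
    (hf : ∀ᶠ x in l, 0 ≤ f x) (hfg : ∀ᶠ x in l, f x ^ δ ≤ g x) (hg : Tendsto g l (nhds 0)) :
    Tendsto f l (nhds 0) := by
  have hfδ : Tendsto (fun x => f x ^ δ) l (nhds 0) :=
    squeeze_zero' (hf.mono fun x hx => Real.rpow_nonneg hx δ) hfg hg
  have hroot := hfδ.rpow_const (p := δ⁻¹) (Or.inr (inv_nonneg.mpr hδ.le))
  rw [Real.zero_rpow (inv_ne_zero hδ.ne')] at hroot
  refine hroot.congr' (hf.mono fun x hx => ?_)
  rw [← Real.rpow_mul hx, mul_inv_cancel₀ hδ.ne', Real.rpow_one]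

theorem stmt3_general (N : ℕ) (hN3 : N ≤ 3) (p a b Q : ℝ)
    (hp4 : p < 4)
    (ha : 0 < a) (hb : 0 < b)
    (m : ℝ → ℝ) (hmpos : ∀ c > (0 : ℝ), 0 < m c)
    (hid : ∀ᶠ c in atTop, a + b * (m c) ^ 2 =
      ((N : ℝ) * (p - 2) / 4) * c ^ ((2 * (N : ℝ) - p * ((N : ℝ) - 2)) / 2) *
        (m c) ^ (((N : ℝ) * (p - 2) - 4) / 2) / Q ^ (p - 2)) :
    Tendsto (fun c => m c / c) atTop (nhds 0) := by
  set α : ℝ := (2 * (N : ℝ) - p * ((N : ℝ) - 2)) / 2 with hα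
  set β : ℝ := ((N : ℝ) * (p - 2) - 4) / 2 with hβ
  set δ : ℝ := (2 * (N : ℝ) + 8 - (N : ℝ) * p) / 2 with hδ
  set K : ℝ := (N : ℝ) * (p - 2) / 4 / Q ^ (p - 2) with hK
  have hδpos : 0 < δ := by
    have hN : (N : ℝ) ≤ 3 := by exact_mod_cast hN3
    nlinarith [mul_nonneg N.cast_nonneg (sub_pos.mpr hp4).le]
  refine tendsto_zero_of_rpow_le hδpos (g := fun c => K / b * c ^ (p - 4)) ?_ ?_ ?_
  · filter_upwards [eventually_gt_atTop 0] with c hc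
    exact div_nonneg (hmpos c hc).le hc.le
  · filter_upwards [hid, eventually_gt_atTop 0] with c hc hc0
    have hmδ : m c ^ δ ≤ K * c ^ α / b :=
      Real.rpow_le_div_of_add_mul_sq_eq (β := β) ha.le hb (hmpos c hc0) (by rw [hβ, hδ]; ring)
        (hc.trans (by rw [hK]; ring))
    have hbound : (m c / c) ^ δ ≤ K / b * c ^ (α - δ) :=
      Real.div_rpow_le_of_rpow_le (hmpos c hc0).le hc0 (hmδ.trans_eq (by ring))
    rwa [show α - δ = p - 4 by rw [hα, hδ]; ring] at hbound
  · have hdecay := (tendsto_rpow_neg_atTop (sub_pos.mpr hp4)).const_mul (K / b)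
    rw [mul_zero, neg_sub] at hdecay
    exact hdecay

theorem stmt3 (N : ℕ) (hN1 : 1 ≤ N) (hN3 : N ≤ 3) (p a b Q : ℝ)
    (hp2 : 2 < p) (hp4 : p < 4) (hp : p < (2 * (N : ℝ) + 8) / N)
    (ha : 0 < a) (hb : 0 < b) (hQ : 0 < Q)
    (m : ℝ → ℝ) (hmpos : ∀ c > (0 : ℝ), 0 < m c)
    (hid : ∀ᶠ c in atTop, a + b * (m c) ^ 2 =
      ((N : ℝ) * (p - 2) / 4) * c ^ ((2 * (N : ℝ) - p * ((N : ℝ) - 2)) / 2) *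
        (m c) ^ (((N : ℝ) * (p - 2) - 4) / 2) / Q ^ (p - 2))
    (hminf : Tendsto m atTop atTop) :
    Tendsto (fun c => m c / c) atTop (nhds 0) :=
  stmt3_general N hN3 p a b Q hp4 ha hb m hmpos hid
end

section
/- Let N ∈ {1,2,3} and 2 < p < (2N+8)/N with D₂ := (2N+8-Np)/(4N(p-2)) > 0 and D₁ := (N(p-2)-4)/(2N(p-2)). Suppose A, B, D are reals with A > 0, 0 < B ≤ (2/(N(p-2)))·A^{(N(p-2)-4)/4}, D ≥ 0, satisfying A²/4 + (D - B)·A + D₂ = 0. Then A²/4 - (2/(N(p-2)))·A^{N(p-2)/4} + D₂ ≤ 0, hence A = 1, D = 0, and B = 2/(N(p-2)). -/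
set_option maxHeartbeats 1000000 in

theorem stmt13 (N : ℕ) (hN1 : 1 ≤ N) (hN3 : N ≤ 3) (p : ℝ)
    (hp2 : 2 < p) (hp : p < (2 * (N : ℝ) + 8) / N)
    (D₂ : ℝ) (hD₂ : D₂ = (2 * (N : ℝ) + 8 - N * p) / (4 * N * (p - 2)))
    (A B D : ℝ) (hA : 0 < A) (hB0 : 0 < B)
    (hB : B ≤ (2 / ((N : ℝ) * (p - 2))) * A ^ (((N : ℝ) * (p - 2) - 4) / 4))
    (hD : 0 ≤ D)
    (heq : A ^ 2 / 4 + (D - B) * A + D₂ = 0) :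
    A ^ 2 / 4 - (2 / ((N : ℝ) * (p - 2))) * A ^ (((N : ℝ) * (p - 2)) / 4) + D₂ ≤ 0 ∧
    A = 1 ∧ D = 0 ∧ B = 2 / ((N : ℝ) * (p - 2)) := by
  have hNpos : (0:ℝ) < N := by exact_mod_cast Nat.pos_of_ne_zero (by omega)
  set m : ℝ := (N : ℝ) * (p - 2) with hm_def
  have hm : 0 < m := mul_pos hNpos (by linarith)
  have hm8 : m < 8 := by
    have := (lt_div_iff₀ hNpos).mp hp
    nlinarith
  have hDval : D₂ = (8 - m) / (4 * m) := by
    rw [hD₂]; rw [hm_def]; ring_nf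
  -- rewrite exponent in hB
  have hexp : A ^ ((m - 4) / 4) = A ^ (m / 4) / A := by
    rw [show (m - 4) / 4 = m / 4 - 1 by ring, Real.rpow_sub hA, Real.rpow_one]
  rw [hexp] at hB
  have hBA : B * A ≤ (2 / m) * A ^ (m / 4) := by
    have := mul_le_mul_of_nonneg_right hB hA.le
    calc B * A ≤ 2 / m * (A ^ (m / 4) / A) * A := this
      _ = (2 / m) * A ^ (m / 4) := by field_simp
  have part1 : A ^ 2 / 4 - (2 / m) * A ^ (m / 4) + D₂ ≤ 0 := by
    nlinarith [mul_nonneg hD hA.le]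
  -- Bernoulli bound: A ^ (m/4) ≤ 1 + (m/8) * (A^2 - 1)
  have hpow : A ^ (m / 4) = (1 + (A ^ 2 - 1)) ^ (m / 8) := by
    have : (1 + (A ^ 2 - 1)) = A ^ ((2:ℕ):ℝ) := by
      rw [Real.rpow_natCast]; ring
    rw [this, ← Real.rpow_mul hA.le]
    norm_num
    rw [show (2:ℝ) * (m / 8) = m / 4 by ring]
  have hs : (-1:ℝ) ≤ A ^ 2 - 1 := by nlinarith
  have hθ1 : 0 < m / 8 := by linarith
  have hθ2 : m / 8 < 1 := by linarith
  have hbern : A ^ (m / 4) ≤ 1 + (m / 8) * (A ^ 2 - 1) := by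
    rw [hpow]
    exact rpow_one_add_le_one_add_mul_self hs hθ1.le hθ2.le
  -- upper bound on c * A^(m/4)
  have hc : (2 / m) * (1 + (m / 8) * (A ^ 2 - 1)) = A ^ 2 / 4 + D₂ := by
    rw [hDval]; field_simp; ring
  have hA1 : A = 1 := by
    by_contra hne
    have hs0 : A ^ 2 - 1 ≠ 0 := by
      intro h
      apply hne
      nlinarith
    have hstrict : A ^ (m / 4) < 1 + (m / 8) * (A ^ 2 - 1) := by
      rw [hpow]
      exact rpow_one_add_lt_one_add_mul_self hs hs0 hθ1 hθ2
    have := mul_lt_mul_of_pos_left hstrict (by positivity : (0:ℝ) < 2 / m)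
    rw [hc] at this
    linarith [part1]
  subst hA1
  rw [Real.one_rpow, mul_one] at hBA
  have h2m : (1:ℝ) / 4 + (8 - m) / (4 * m) = 2 / m := by field_simp; ring
  have hD1 : D = B - 2 / m := by
    rw [hDval] at heq; norm_num at heq; linarith
  have hB' : B ≤ 2 / m := by simpa using hBA
  have hD0 : D = 0 := le_antisymm (by linarith) hD
  exact ⟨part1, rfl, hD0, by linarith⟩
end
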